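/- For every integer n with n ≡ 3 (mod 4) and 3 ≤ n ≤ 203, the n-crossing permutations over S_{n+3} generate exactly the parity-preserving subgroup: C(n, n+3) = P_{n+3}. (Writing n = 4k + 3, this subgroup is isomorphic to S_{2k+3} × S_{2k+3}, acting separately on the odd-numbered and even-numbered points of {1, …, n+3}.) -/

import Mathlib

/-- The underlying function of the `n`-crossing permutation `π_j` over `{1, …, m}` (as a
function on `ℕ`): it sends `j + k` to `j + n - 1 - k` for `0 ≤ k ≤ n - 1` and fixes all
other points. -/
def crossFun (n j i : ℕ) : ℕ :=
  if j ≤ i ∧ i < j + n then 2 * j + n - 1 - i else i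

lemma crossFun_involutive (n j : ℕ) : Function.Involutive (crossFun n j) := by
  intro i
  unfold crossFun
  split_ifs <;> omega

/-- The `n`-crossing permutation `π_j`, viewed as a permutation of `ℕ` fixing every point
outside `{j, …, j + n - 1}`. -/
def crossPerm (n j : ℕ) : Equiv.Perm ℕ :=
  Function.Involutive.toPerm _ (crossFun_involutive n j)

/-- `C n m` is the subgroup of the symmetric group `S_m` (realized as permutations of `ℕ`
supported on `{1, …, m}`) generated by the `n`-crossing permutations `π_1, …, π_{m-n+1}`. -/
def C (n m : ℕ) : Subgroup (Equiv.Perm ℕ) :=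
  Subgroup.closure {σ | ∃ j, 1 ≤ j ∧ j ≤ m - n + 1 ∧ σ = crossPerm n j}

/-!
Each `π_j` reverses an interval of odd length, so it preserves parity and `C n m ≤ P_m`.

For the converse, short words in `π_1, …, π_4` are the 3-cycles `(x, x+2, x+4)` for `x ≤ 2` and
for `x ∈ {n - 2, n - 1}`, and conjugation by `π_3 π_4`, which shifts `{5, …, n + 3}` down by two,
carries the latter to every `x ≥ 3`. These 3-cycles push any parity-preserving permutation into
`{1, …, 4}`; hence they generate the kernel of the two class signs (the signs on the odd and on the
even points), as the only permutation of `{1, …, 4}` in that kernel is the identity.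

For `n = 4k + 3`, `π_j` reverses `2k + 2` points of the parity of `j` and `2k + 1` of the other,
so its class signs are `(-1)^(k+1)` and `(-1)^k`. Thus `π_1` or `π_2` has the class signs of
`(1 3)`, and the other those of `(2 4)`; both transpositions then lie in `C`, and together with the
3-cycles they generate `P_{n+3}`.
-/

open Equiv

def parityPerm (m : ℕ) : Subgroup (Perm ℕ) where
  carrier := {σ | (∀ i, σ i % 2 = i % 2) ∧ ∀ i, σ i ≠ i → 1 ≤ i ∧ i ≤ m}
  one_mem' := ⟨fun _ => rfl, fun _ h => absurd rfl h⟩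
  mul_mem' := by
    rintro σ τ ⟨hσ, hσm⟩ ⟨hτ, hτm⟩
    refine ⟨fun i => (hσ _).trans (hτ i), fun i h => ?_⟩
    by_cases hi : τ i = i
    · exact hσm i (by simpa [hi] using h)
    · exact hτm i hi
  inv_mem' := by
    rintro σ ⟨hσ, hσm⟩
    refine ⟨fun i => by simpa using (hσ (σ⁻¹ i)).symm, fun i h => hσm i fun e => h ?_⟩
    exact Perm.inv_eq_iff_eq.mpr e.symm

def parityClass (m c : ℕ) : Finset ℕ := (Finset.range (m + 1)).filter (· % 2 = c % 2)

namespace parityPerm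

variable {m : ℕ} {σ τ : Perm ℕ}

theorem mono {m m' : ℕ} (h : m ≤ m') : parityPerm m ≤ parityPerm m' :=
  fun _ hσ => ⟨hσ.1, fun i hi => ⟨(hσ.2 i hi).1, (hσ.2 i hi).2.trans h⟩⟩

theorem apply_mem_Icc (hσ : σ ∈ parityPerm m) {i : ℕ} (h : σ i ≠ i) : 1 ≤ σ i ∧ σ i ≤ m :=
  hσ.2 _ fun e => h (σ.injective e)

theorem apply_eq_self (hσ : σ ∈ parityPerm m) {i : ℕ} (h : i = 0 ∨ m < i) : σ i = i := by
  by_contra hi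
  have := hσ.2 i hi
  omega

theorem mem_of_apply_succ (hσ : σ ∈ parityPerm (m + 1)) (h : σ (m + 1) = m + 1) :
    σ ∈ parityPerm m := by
  refine ⟨hσ.1, fun i hi => ?_⟩
  have := hσ.2 i hi
  have : i ≠ m + 1 := by rintro rfl; exact hi h
  omega

theorem eq_of_eqOn (hσ : σ ∈ parityPerm m) (hτ : τ ∈ parityPerm m)
    (h : ∀ i, 1 ≤ i → i ≤ m → σ i = τ i) : σ = τ := by
  ext i
  by_cases hi : 1 ≤ i ∧ i ≤ m
  · exact h i hi.1 hi.2
  · rw [apply_eq_self hσ (by omega), apply_eq_self hτ (by omega)]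

theorem swap_mem {a b : ℕ} (hab : a % 2 = b % 2) (ha : 1 ≤ a) (ham : a ≤ m) (hb : 1 ≤ b)
    (hbm : b ≤ m) : swap a b ∈ parityPerm m := by
  refine ⟨fun i => ?_, fun i hi => ?_⟩
  · rw [swap_apply_def]
    split_ifs <;> omega
  · rw [swap_apply_def] at hi
    split_ifs at hi <;> omega

theorem eq_of_mem_four (hσ : σ ∈ parityPerm 4) :
    σ = 1 ∨ σ = swap 1 3 ∨ σ = swap 2 4 ∨ σ = swap 1 3 * swap 2 4 := by
  have h := fun i => (em (σ i = i)).imp_right (apply_mem_Icc hσ)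
  have hodd : σ 1 = 1 ∧ σ 3 = 3 ∨ σ 1 = 3 ∧ σ 3 = 1 := by
    have := σ.injective.ne (show (1 : ℕ) ≠ 3 by decide)
    have := h 1; have := h 3; have := hσ.1 1; have := hσ.1 3
    omega
  have heven : σ 2 = 2 ∧ σ 4 = 4 ∨ σ 2 = 4 ∧ σ 4 = 2 := by
    have := σ.injective.ne (show (2 : ℕ) ≠ 4 by decide)
    have := h 2; have := h 4; have := hσ.1 2; have := hσ.1 4
    omega
  have h13 : swap 1 3 ∈ parityPerm 4 := swap_mem rfl (by omega) (by omega) (by omega) (by omega)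
  have h24 : swap 2 4 ∈ parityPerm 4 := swap_mem rfl (by omega) (by omega) (by omega) (by omega)
  have hext : ∀ τ ∈ parityPerm 4, (∀ i ∈ ({1, 2, 3, 4} : Finset ℕ), σ i = τ i) → σ = τ :=
    fun τ hτ hi => eq_of_eqOn hσ hτ fun i h1 h4 => hi i (by simp; omega)
  rcases hodd with ⟨h1, h3⟩ | ⟨h1, h3⟩ <;> rcases heven with ⟨h2, h4⟩ | ⟨h2, h4⟩
  · exact .inl (hext 1 (one_mem _) (by simp [*]))
  · exact .inr (.inr (.inl (hext _ h24 (by simp [*, swap_apply_def]))))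
  · exact .inr (.inl (hext _ h13 (by simp [*, swap_apply_def])))
  · exact .inr (.inr (.inr (hext _ (mul_mem h13 h24) (by simp [*, swap_apply_def]))))

theorem apply_mem_parityClass_iff {c : ℕ} (hσ : σ ∈ parityPerm m) (i : ℕ) :
    σ i ∈ parityClass m c ↔ i ∈ parityClass m c := by
  simp only [parityClass, Finset.mem_filter, Finset.mem_range, hσ.1 i]
  by_cases hi : σ i = i
  · rw [hi]
  · have := hσ.2 i hi
    have := apply_mem_Icc hσ hi
    omega

end parityPerm

def classSign (m c : ℕ) : parityPerm m →* ℤˣ where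
  toFun σ :=
    Perm.sign ((σ : Perm ℕ).subtypePerm (parityPerm.apply_mem_parityClass_iff (c := c) σ.2))
  map_one' := (congrArg Perm.sign (Perm.subtypePerm_one _ _)).trans (map_one _)
  map_mul' σ τ := by
    rw [← map_mul, Perm.subtypePerm_mul]
    rfl

section classSign

variable {m c : ℕ}

theorem classSign_mul {σ τ : Perm ℕ} (hσ : σ ∈ parityPerm m) (hτ : τ ∈ parityPerm m) :
    classSign m c ⟨σ * τ, mul_mem hσ hτ⟩ = classSign m c ⟨σ, hσ⟩ * classSign m c ⟨τ, hτ⟩ :=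
  map_mul (classSign m c) ⟨σ, hσ⟩ ⟨τ, hτ⟩

theorem classSign_congr {σ τ : parityPerm m}
    (h : ∀ i, i % 2 = c % 2 → (σ : Perm ℕ) i = (τ : Perm ℕ) i) :
    classSign m c σ = classSign m c τ := by
  simp only [classSign, MonoidHom.coe_mk, OneHom.coe_mk]
  congr 1
  ext ⟨i, hi⟩
  exact h i (Finset.mem_filter.mp hi).2

theorem classSign_swap {a b : ℕ} (h : swap a b ∈ parityPerm m) (hab : a ≠ b)
    (hpar : a % 2 = b % 2) : classSign m c ⟨swap a b, h⟩ = Int.negOnePow (a + c + 1) := by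
  by_cases hc : a % 2 = c % 2
  · have ha := h.2 a (by simpa using hab.symm)
    have hb := h.2 b (by simpa using hab)
    have hmem : ∀ x, x % 2 = c % 2 → x ≤ m → x ∈ parityClass m c := fun x hx hxm => by
      simp [parityClass]; omega
    rw [Int.negOnePow_odd _ (by rw [Int.odd_iff]; omega)]
    have hsub : (swap a b).subtypePerm (parityPerm.apply_mem_parityClass_iff h (c := c)) =
        swap ⟨a, hmem a hc ha.2⟩ ⟨b, hmem b (by omega) hb.2⟩ := by
      ext ⟨i, hi⟩
      simp only [Perm.subtypePerm_apply, swap_apply_def, Subtype.mk.injEq]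
      split_ifs <;> rfl
    exact (congrArg Perm.sign hsub).trans (Perm.sign_swap (by simpa using hab))
  · rw [Int.negOnePow_even _ (by rw [Int.even_iff]; omega)]
    rw [show classSign m c ⟨swap a b, h⟩ = classSign m c 1 from classSign_congr fun i hi => ?_]
    · exact map_one _
    · exact swap_apply_of_ne_of_ne (by rintro rfl; omega) (by rintro rfl; omega)

end classSign

def cyc3 (x : ℕ) : Perm ℕ := swap x (x + 2) * swap (x + 2) (x + 4)

def cyc3Group (m : ℕ) : Subgroup (Perm ℕ) :=
  Subgroup.closure {g | ∃ x, 1 ≤ x ∧ x + 4 ≤ m ∧ g = cyc3 x}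

section cyc3

variable {m : ℕ}

theorem cyc3_apply_self (x : ℕ) : cyc3 x x = x + 2 := by
  simp [cyc3, swap_apply_of_ne_of_ne]

theorem cyc3_apply_add_two (x : ℕ) : cyc3 x (x + 2) = x + 4 := by
  simp [cyc3, swap_apply_of_ne_of_ne]

theorem cyc3_mem_cyc3Group {x : ℕ} (hx : 1 ≤ x) (hxm : x + 4 ≤ m) : cyc3 x ∈ cyc3Group m :=
  Subgroup.subset_closure ⟨x, hx, hxm, rfl⟩

theorem cyc3Group_mono {m m' : ℕ} (h : m ≤ m') : cyc3Group m ≤ cyc3Group m' :=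
  Subgroup.closure_mono fun _ ⟨x, hx, hxm, e⟩ => ⟨x, hx, hxm.trans h, e⟩

theorem cyc3_mem_parityPerm {x : ℕ} (hx : 1 ≤ x) (hxm : x + 4 ≤ m) :
    cyc3 x ∈ parityPerm m :=
  mul_mem (parityPerm.swap_mem (by omega) hx (by omega) (by omega) (by omega))
    (parityPerm.swap_mem (by omega) (by omega) (by omega) (by omega) hxm)

theorem cyc3Group_le_parityPerm : cyc3Group m ≤ parityPerm m :=
  Subgroup.closure_le _ |>.mpr fun _ ⟨_, hx, hxm, e⟩ => e ▸ cyc3_mem_parityPerm hx hxm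

theorem classSign_eq_one_of_mem_cyc3Group {c : ℕ} (σ : parityPerm m)
    (hσ : (σ : Perm ℕ) ∈ cyc3Group m) : classSign m c σ = 1 := by
  suffices cyc3Group m ≤ (classSign m c).ker.map (parityPerm m).subtype by
    obtain ⟨τ, hτ, e⟩ := this hσ
    rwa [← Subtype.ext e]
  refine Subgroup.closure_le _ |>.mpr ?_
  rintro _ ⟨x, hx, hxm, rfl⟩
  have h1 : swap x (x + 2) ∈ parityPerm m :=
    parityPerm.swap_mem (by omega) hx (by omega) (by omega) (by omega)
  have h2 : swap (x + 2) (x + 4) ∈ parityPerm m :=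
    parityPerm.swap_mem (by omega) (by omega) (by omega) (by omega) hxm
  refine ⟨⟨_, mul_mem h1 h2⟩, ?_, rfl⟩
  rw [SetLike.mem_coe, MonoidHom.mem_ker, classSign_mul h1 h2,
    classSign_swap _ (by omega) (by omega), classSign_swap _ (by omega) (by omega),
    ← Int.negOnePow_add]
  exact Int.negOnePow_even _ ⟨x + c + 2, by push_cast; ring⟩

theorem exists_mem_cyc3Group_apply_eq_add_two {B a : ℕ} (hB : 5 ≤ B) (ha : 1 ≤ a)
    (haB : a + 2 ≤ B) (hpar : a % 2 = B % 2) : ∃ γ ∈ cyc3Group B, γ a = a + 2 := by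
  by_cases h : a + 4 ≤ B
  · exact ⟨cyc3 a, cyc3_mem_cyc3Group ha h, cyc3_apply_self a⟩
  · obtain ⟨x, rfl⟩ : ∃ x, a = x + 2 := ⟨a - 2, by omega⟩
    exact ⟨cyc3 x, cyc3_mem_cyc3Group (by omega) (by omega), cyc3_apply_add_two x⟩

theorem exists_mem_cyc3Group_apply_eq {B a : ℕ} (hB : 5 ≤ B) (ha : 1 ≤ a) (haB : a ≤ B)
    (hpar : a % 2 = B % 2) : ∃ γ ∈ cyc3Group B, γ a = B := by
  obtain ⟨d, hd⟩ : ∃ d, a + 2 * d = B := ⟨(B - a) / 2, by omega⟩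
  induction d generalizing a with
  | zero => exact ⟨1, one_mem _, by simp; omega⟩
  | succ d ih =>
    obtain ⟨γ, hγ, hγa⟩ := ih (a := a + 2) (by omega) (by omega) (by omega) (by omega)
    obtain ⟨δ, hδ, hδa⟩ := exists_mem_cyc3Group_apply_eq_add_two hB ha (by omega) hpar
    exact ⟨γ * δ, mul_mem hγ hδ, by rw [Perm.mul_apply, hδa, hγa]⟩

theorem exists_mul_mem_parityPerm_four {σ : Perm ℕ} (hσ : σ ∈ parityPerm m) :
    ∃ γ ∈ cyc3Group m, γ * σ ∈ parityPerm 4 := by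
  induction m generalizing σ with
  | zero => exact ⟨1, one_mem _, by simpa using parityPerm.mono (by omega) hσ⟩
  | succ B ih =>
    by_cases hB : B + 1 ≤ 4
    · exact ⟨1, one_mem _, by simpa using parityPerm.mono hB hσ⟩
    by_cases hfix : σ (B + 1) = B + 1
    · obtain ⟨γ, hγ, hγσ⟩ := ih (parityPerm.mem_of_apply_succ hσ hfix)
      exact ⟨γ, cyc3Group_mono (by omega) hγ, hγσ⟩
    have := parityPerm.apply_mem_Icc hσ hfix
    obtain ⟨δ, hδ, hδσ⟩ := exists_mem_cyc3Group_apply_eq (by omega) this.1 this.2 (hσ.1 _)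
    obtain ⟨γ, hγ, hγδσ⟩ := ih (σ := δ * σ)
      (parityPerm.mem_of_apply_succ (mul_mem (cyc3Group_le_parityPerm hδ) hσ) hδσ)
    exact ⟨γ * δ, mul_mem (cyc3Group_mono (by omega) hγ) hδ, by rwa [mul_assoc]⟩

end cyc3

section kernel

variable {m : ℕ}

theorem eq_one_of_classSign_eq_one {σ : Perm ℕ} (hσ : σ ∈ parityPerm m) (h4 : σ ∈ parityPerm 4)
    (h : ∀ c, classSign m c ⟨σ, hσ⟩ = 1) : σ = 1 := by
  rcases parityPerm.eq_of_mem_four h4 with rfl | rfl | rfl | rfl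
  · rfl
  · have := h 1
    rw [classSign_swap hσ (by omega) rfl] at this
    exact absurd this (by decide)
  · have := h 0
    rw [classSign_swap hσ (by omega) rfl] at this
    exact absurd this (by decide)
  · have hm := (hσ.2 4 (by simp [swap_apply_of_ne_of_ne])).2
    have h13 : swap 1 3 ∈ parityPerm m :=
      parityPerm.swap_mem rfl le_rfl (by omega) (by omega) (by omega)
    have h24 : swap 2 4 ∈ parityPerm m :=
      parityPerm.swap_mem rfl (by omega) (by omega) (by omega) hm
    have := h 1
    rw [classSign_mul h13 h24, classSign_swap h13 (by omega) rfl,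
      classSign_swap h24 (by omega) rfl] at this
    exact absurd this (by decide)

theorem mem_cyc3Group_of_classSign_eq_one (σ : parityPerm m) (h : ∀ c, classSign m c σ = 1) :
    (σ : Perm ℕ) ∈ cyc3Group m := by
  obtain ⟨γ, hγ, h4⟩ := exists_mul_mem_parityPerm_four σ.2
  have hγP := cyc3Group_le_parityPerm hγ
  have : γ * σ = 1 := eq_one_of_classSign_eq_one (mul_mem hγP σ.2) h4 fun c => by
    rw [classSign_mul hγP σ.2, classSign_eq_one_of_mem_cyc3Group _ hγ, one_mul, h]
  rw [eq_inv_of_mul_eq_one_right this]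
  exact inv_mem hγ

theorem mem_of_classSign_eq {H : Subgroup (Perm ℕ)} (hT : cyc3Group m ≤ H) {s σ : parityPerm m}
    (hs : (s : Perm ℕ) ∈ H) (h : ∀ c, classSign m c s = classSign m c σ) : (σ : Perm ℕ) ∈ H := by
  have : ((s⁻¹ * σ : parityPerm m) : Perm ℕ) ∈ H :=
    hT (mem_cyc3Group_of_classSign_eq_one _ fun c => by simp [h c])
  simpa using mul_mem hs this

theorem parityPerm_le_of_swap_mem {H : Subgroup (Perm ℕ)} (hT : cyc3Group m ≤ H)
    (h13 : swap 1 3 ∈ H) (h24 : swap 2 4 ∈ H) : parityPerm m ≤ H := by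
  intro σ hσ
  obtain ⟨γ, hγ, h4⟩ := exists_mul_mem_parityPerm_four hσ
  have : γ * σ ∈ H := by
    rcases parityPerm.eq_of_mem_four h4 with e | e | e | e <;> rw [e]
    exacts [one_mem _, h13, h24, mul_mem h13 h24]
  simpa using mul_mem (inv_mem (hT hγ)) this

end kernel

section crossPerm

variable {n m j : ℕ}

theorem crossPerm_apply (i : ℕ) :
    crossPerm n j i = if j ≤ i ∧ i < j + n then 2 * j + n - 1 - i else i := rfl

theorem crossPerm_mem_parityPerm (hn : n % 2 = 1) (hj : 1 ≤ j) (hjm : j + n ≤ m + 1) :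
    crossPerm n j ∈ parityPerm m := by
  refine ⟨fun i => ?_, fun i hi => ?_⟩
  · rw [crossPerm_apply]
    split_ifs <;> omega
  · rw [crossPerm_apply] at hi
    split_ifs at hi <;> omega

theorem C_le_parityPerm (hn : n % 2 = 1) (hnm : n ≤ m) : C n m ≤ parityPerm m :=
  Subgroup.closure_le _ |>.mpr fun _ ⟨_, hj, hjm, e⟩ =>
    e ▸ crossPerm_mem_parityPerm hn hj (by omega)

theorem crossPerm_mem_C (hj : 1 ≤ j) (hjm : j ≤ m - n + 1) : crossPerm n j ∈ C n m :=
  Subgroup.subset_closure ⟨j, hj, hjm, rfl⟩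

theorem crossPerm_three : crossPerm 3 j = swap j (j + 2) := by
  ext i
  rw [crossPerm_apply, swap_apply_def]
  split_ifs <;> omega

theorem crossPerm_add_four :
    crossPerm (n + 4) j = swap j (j + n + 3) * swap (j + 1) (j + n + 2) * crossPerm n (j + 2) := by
  ext i
  simp only [Perm.mul_apply, crossPerm_apply, swap_apply_def]
  split_ifs <;> omega

theorem classSign_crossPerm {c k : ℕ} (h : crossPerm (4 * k + 3) j ∈ parityPerm m) :
    classSign m c ⟨_, h⟩ = Int.negOnePow (k + j + c + 1) := by
  induction k generalizing j with
  | zero =>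
    simp only [Nat.mul_zero, Nat.zero_add, crossPerm_three] at h ⊢
    rw [classSign_swap h (by omega) (by omega)]
    push_cast; ring_nf
  | succ k ih =>
    have hj := h.2 j (by rw [crossPerm_apply]; split_ifs <;> omega)
    have hjm := h.2 (j + 4 * k + 6) (by rw [crossPerm_apply]; split_ifs <;> omega)
    have h1 : swap j (j + 4 * k + 6) ∈ parityPerm m :=
      parityPerm.swap_mem (by omega) (by omega) (by omega) (by omega) (by omega)
    have h2 : swap (j + 1) (j + 4 * k + 5) ∈ parityPerm m :=
      parityPerm.swap_mem (by omega) (by omega) (by omega) (by omega) (by omega)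
    have h3 : crossPerm (4 * k + 3) (j + 2) ∈ parityPerm m :=
      crossPerm_mem_parityPerm (by omega) (by omega) (by omega)
    have e : crossPerm (4 * (k + 1) + 3) j =
        swap j (j + 4 * k + 6) * swap (j + 1) (j + 4 * k + 5) * crossPerm (4 * k + 3) (j + 2) := by
      rw [show 4 * (k + 1) + 3 = 4 * k + 3 + 4 by ring, crossPerm_add_four]
      ring_nf
    simp only [e]
    rw [classSign_mul (mul_mem h1 h2) h3, classSign_mul h1 h2,
      classSign_swap h1 (by omega) (by omega), classSign_swap h2 (by omega) (by omega), ih h3,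
      ← Int.negOnePow_add, ← Int.negOnePow_add, Int.negOnePow_eq_iff]
    exact ⟨j + c + 2, by push_cast; ring⟩

end crossPerm

theorem conj_swap_mul_swap {α : Type*} [DecidableEq α] (f : Perm α) (a b c : α) :
    f * (swap a b * swap b c) * f⁻¹ = swap (f a) (f b) * swap (f b) (f c) := by
  rw [swap_apply_apply, swap_apply_apply]
  group

section seeds

variable {n j : ℕ}

theorem crossPerm_mul_crossPerm_succ_apply {y : ℕ} (hy : j ≤ y) (hyn : y + 2 ≤ j + n) :
    (crossPerm n j * crossPerm n (j + 1)) (y + 2) = y := by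
  simp only [Perm.mul_apply, crossPerm_apply]
  split_ifs <;> omega

theorem crossPerm_word_eq_swap_mul_swap (hn : 3 ≤ n) :
    crossPerm n (j + 1) * crossPerm n (j + 2) * crossPerm n (j + 1) * crossPerm n j =
      swap j (j + n + 1) * swap (j + n + 1) (j + n - 1) := by
  ext i
  simp only [Perm.mul_apply, crossPerm_apply, swap_apply_def]
  split_ifs <;> omega

theorem crossPerm_word_eq_swap_mul_swap' (hn : 3 ≤ n) :
    crossPerm n (j + 2) * crossPerm n (j + 1) * crossPerm n j * crossPerm n (j + 1) =
      swap (j + 2) j * swap j (j + n + 1) := by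
  ext i
  simp only [Perm.mul_apply, crossPerm_apply, swap_apply_def]
  split_ifs <;> omega

theorem cyc3_mem_C_of_le_two (hn : 3 ≤ n) (hj : 1 ≤ j) (hj2 : j ≤ 2) :
    cyc3 j ∈ C n (n + 3) := by
  have e := conj_swap_mul_swap (crossPerm n (j + 2)) j (j + n + 1) (j + n - 1)
  rw [← crossPerm_word_eq_swap_mul_swap hn] at e
  have h0 : crossPerm n (j + 2) j = j := by rw [crossPerm_apply]; split_ifs <;> omega
  have h1 : crossPerm n (j + 2) (j + n + 1) = j + 2 := by
    rw [crossPerm_apply]; split_ifs <;> omega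
  have h2 : crossPerm n (j + 2) (j + n - 1) = j + 4 := by
    rw [crossPerm_apply]; split_ifs <;> omega
  rw [h0, h1, h2] at e
  rw [cyc3, ← e]
  apply_rules [mul_mem, inv_mem, crossPerm_mem_C] <;> omega

theorem cyc3_add_sub_three_mem_C (hn : 3 ≤ n) (hj : 1 ≤ j) (hj2 : j ≤ 2) :
    cyc3 (n + j - 3) ∈ C n (n + 3) := by
  have e := conj_swap_mul_swap (crossPerm n j) (j + 2) j (j + n + 1)
  rw [← crossPerm_word_eq_swap_mul_swap' hn] at e
  have h0 : crossPerm n j (j + 2) = n + j - 3 := by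
    rw [crossPerm_apply]; split_ifs <;> omega
  have h1 : crossPerm n j j = n + j - 3 + 2 := by
    rw [crossPerm_apply]; split_ifs <;> omega
  have h2 : crossPerm n j (j + n + 1) = n + j - 3 + 4 := by
    rw [crossPerm_apply]; split_ifs <;> omega
  rw [h0, h1, h2] at e
  rw [cyc3, ← e]
  apply_rules [mul_mem, inv_mem, crossPerm_mem_C] <;> omega

end seeds

theorem cyc3_mem_of_shift {H : Subgroup (Perm ℕ)} {f : Perm ℕ} (hf : f ∈ H) {lo hi : ℕ}
    (hshift : ∀ y, lo ≤ y → y ≤ hi → f (y + 2) = y) {x : ℕ} (k : ℕ) (hx : lo ≤ x)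
    (hk : x + 2 * k + 2 ≤ hi) (hmem : cyc3 (x + 2 * k) ∈ H) : cyc3 x ∈ H := by
  induction k generalizing x with
  | zero => simpa using hmem
  | succ k ih =>
    have h := ih (x := x + 2) (by omega) (by omega)
      (by rwa [show x + 2 + 2 * k = x + 2 * (k + 1) by ring])
    have e : f * cyc3 (x + 2) * f⁻¹ = cyc3 x := by
      rw [cyc3, conj_swap_mul_swap, hshift x hx (by omega), hshift (x + 2) (by omega) (by omega),
        show x + 2 + 4 = x + 4 + 2 by ring, hshift (x + 4) (by omega) (by omega)]
      rfl
    rw [← e]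
    exact mul_mem (mul_mem hf h) (inv_mem hf)

theorem cyc3Group_le_C {n : ℕ} (hn : 3 ≤ n) : cyc3Group (n + 3) ≤ C n (n + 3) := by
  refine Subgroup.closure_le _ |>.mpr ?_
  rintro _ ⟨x, hx, hxn, rfl⟩
  by_cases hx2 : x ≤ 2
  · exact cyc3_mem_C_of_le_two hn hx hx2
  have hf : crossPerm n 3 * crossPerm n 4 ∈ C n (n + 3) :=
    mul_mem (crossPerm_mem_C (by omega) (by omega)) (crossPerm_mem_C (by omega) (by omega))
  set k := (n - 1 - x) / 2
  refine cyc3_mem_of_shift hf (lo := 3) (hi := n + 1)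
    (fun y hy hyn => crossPerm_mul_crossPerm_succ_apply hy (by omega)) k (by omega) (by omega) ?_
  have := cyc3_add_sub_three_mem_C (j := x + 2 * k + 3 - n) hn (by omega) (by omega)
  rwa [show n + (x + 2 * k + 3 - n) - 3 = x + 2 * k by omega] at this

theorem swap_mem_C {n a : ℕ} (hn : n % 4 = 3) (ha : 1 ≤ a) (ha2 : a ≤ 2) :
    swap a (a + 2) ∈ C n (n + 3) := by
  obtain ⟨k, rfl⟩ : ∃ k, n = 4 * k + 3 := ⟨n / 4, by omega⟩
  -- `π_j` with `j ≡ k + a (mod 2)` has the class signs of the transposition `(a a+2)`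
  have hs := crossPerm_mem_parityPerm (n := 4 * k + 3) (m := 4 * k + 3 + 3)
    (j := 2 - (k + a) % 2) (by omega) (by omega) (by omega)
  have hw := parityPerm.swap_mem (m := 4 * k + 3 + 3) (a := a) (b := a + 2) (by omega) ha
    (by omega) (by omega) (by omega)
  refine mem_of_classSign_eq (s := ⟨_, hs⟩) (σ := ⟨_, hw⟩) (cyc3Group_le_C (by omega))
    (crossPerm_mem_C (by omega) (by omega)) fun c => ?_
  rw [classSign_crossPerm, classSign_swap hw (by omega) (by omega), Int.negOnePow_eq_iff,
    Int.even_iff]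
  omega

theorem stmt17_general (n : ℕ) (hn : n % 4 = 3) :
    ∀ σ : Equiv.Perm ℕ, σ ∈ C n (n + 3) ↔
      ((∀ i, σ i % 2 = i % 2) ∧ (∀ i, σ i ≠ i → 1 ≤ i ∧ i ≤ n + 3)) := by
  intro σ
  have hn3 : 3 ≤ n := by omega
  constructor
  · exact fun h => C_le_parityPerm (by omega) (by omega) h
  · exact fun h => parityPerm_le_of_swap_mem (cyc3Group_le_C hn3)
      (swap_mem_C hn le_rfl (by omega)) (swap_mem_C hn (by omega) le_rfl) h

theorem stmt17 (n : ℕ) (hn : n % 4 = 3) (hn3 : 3 ≤ n) (hn203 : n ≤ 203) :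
    ∀ σ : Equiv.Perm ℕ, σ ∈ C n (n + 3) ↔
      ((∀ i, σ i % 2 = i % 2) ∧ (∀ i, σ i ≠ i → 1 ≤ i ∧ i ≤ n + 3)) :=
  stmt17_general n hn
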